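/- arXiv:2305.17556 — 2 statements merged into one kernel-verified Lean document; each statement's English description precedes it below -/
import Mathlib

section
/- Let OPT be the minimum makespan of a scheduling instance with m processors of speeds s_1,…,s_m ≥ s_min and equal processing costs p, and let T* be the minimum makespan of the same instance under the additional constraint that on each processor i every start time is an integer multiple of p/s_i. Then T* − p/s_min ≤ OPT ≤ T*. -/
/-!
Rounding every start time up to the next multiple of its task's duration `p / s_i` keeps a
schedule feasible: if one task ends before another starts on the same processor, the gap of
at least one duration survives the rounding because both are rounded on the same grid. Each
completion time grows by less than one duration, hence by at most `p / s_min`. So every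
makespan is within `p / s_min` of a grid makespan, while grid schedules are schedules.
-/

/-- A schedule of `n` equal-cost tasks on `m` related processors: a processor assignment
and start times, with tasks on a common processor not overlapping. -/
def Feasible {n m : ℕ} (s : Fin m → ℝ) (p : ℝ)
    (proc : Fin n → Fin m) (start : Fin n → ℝ) : Prop :=
  (∀ j, 0 ≤ start j) ∧
    ∀ j k, j ≠ k → proc j = proc k →
      start j + p / s (proc j) ≤ start k ∨ start k + p / s (proc k) ≤ start j

/-- The makespan of a schedule: the maximum completion time. -/
noncomputable def makespan {n m : ℕ} (s : Fin m → ℝ) (p : ℝ)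
    (proc : Fin n → Fin m) (start : Fin n → ℝ) : ℝ :=
  ⨆ j, (start j + p / s (proc j))

section Rounding

variable {a b q : ℝ}

lemma natCeil_div_mul_le_add (ha : 0 ≤ a) (hq : 0 < q) : (⌈a / q⌉₊ : ℝ) * q ≤ a + q :=
  calc (⌈a / q⌉₊ : ℝ) * q ≤ (a / q + 1) * q := by
        gcongr; exact (Nat.ceil_lt_add_one (div_nonneg ha hq.le)).le
    _ = a + q := by field_simp

lemma natCeil_div_mul_add_le (ha : 0 ≤ a) (hq : 0 < q) (h : a + q ≤ b) :
    (⌈a / q⌉₊ : ℝ) * q + q ≤ (⌈b / q⌉₊ : ℝ) * q := by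
  have hdiv : a / q + 1 ≤ b / q := by
    rw [div_add_one hq.ne']
    exact div_le_div_of_nonneg_right h hq.le
  have hceil : ⌈a / q⌉₊ + 1 ≤ ⌈b / q⌉₊ := by
    simpa [Nat.ceil_add_one (div_nonneg ha hq.le)] using Nat.ceil_mono hdiv
  calc (⌈a / q⌉₊ : ℝ) * q + q = ((⌈a / q⌉₊ + 1 : ℕ) : ℝ) * q := by push_cast; ring
    _ ≤ (⌈b / q⌉₊ : ℝ) * q := by gcongr

end Rounding

section Infimum

variable {S T : Set ℝ}

-- `sInf ∅ = 0` in `ℝ`, so an empty `S` has to force an empty `T`.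
lemma Real.sInf_le_sInf_of_subset_of_nonempty (hS : BddBelow S) (hTS : T ⊆ S)
    (hne : S.Nonempty → T.Nonempty) : sInf S ≤ sInf T := by
  rcases S.eq_empty_or_nonempty with rfl | hS'
  · rw [Set.subset_empty_iff.1 hTS]
  · exact csInf_le_csInf hS (hne hS') hTS

lemma Real.sInf_le_sInf_add_of_forall_exists_le_add {d : ℝ} (hd : 0 ≤ d) (hS : BddBelow S)
    (hTS : T ⊆ S) (happrox : ∀ x ∈ S, ∃ y ∈ T, y ≤ x + d) : sInf T ≤ sInf S + d := by
  rcases S.eq_empty_or_nonempty with rfl | hS'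
  · simpa [Set.subset_empty_iff.1 hTS] using hd
  · rw [← sub_le_iff_le_add]
    refine le_csInf hS' fun x hx => ?_
    obtain ⟨y, hy, hyx⟩ := happrox x hx
    linarith [csInf_le (hS.mono hTS) hy]

end Infimum

section Schedule

variable {n m : ℕ} {s : Fin m → ℝ} {p : ℝ} {proc : Fin n → Fin m} {start : Fin n → ℝ}

lemma le_makespan (j : Fin n) : start j + p / s (proc j) ≤ makespan s p proc start :=
  le_ciSup (f := fun j => start j + p / s (proc j)) (Set.finite_range _).bddAbove j

lemma Feasible.makespan_nonneg (h : Feasible s p proc start) (hp : 0 ≤ p)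
    (hs : ∀ i, 0 ≤ s i) : 0 ≤ makespan s p proc start :=
  Real.iSup_nonneg fun j => add_nonneg (h.1 j) (div_nonneg hp (hs _))

noncomputable def roundStart (s : Fin m → ℝ) (p : ℝ) (proc : Fin n → Fin m)
    (start : Fin n → ℝ) (j : Fin n) : ℝ :=
  ⌈start j / (p / s (proc j))⌉₊ * (p / s (proc j))

lemma Feasible.roundStart (h : Feasible s p proc start) (hp : 0 < p) (hs : ∀ i, 0 < s i) :
    Feasible s p proc (roundStart s p proc start) := by
  have hq : ∀ i, 0 < p / s i := fun i => div_pos hp (hs i)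
  refine ⟨fun j => mul_nonneg (Nat.cast_nonneg _) (hq _).le, fun j k hjk hproc => ?_⟩
  unfold _root_.roundStart
  rw [← hproc]
  rcases h.2 j k hjk hproc with hjk' | hkj
  · exact .inl (natCeil_div_mul_add_le (h.1 j) (hq _) (hproc ▸ hjk'))
  · exact .inr (natCeil_div_mul_add_le (h.1 k) (hq _) (hproc ▸ hkj))

lemma makespan_roundStart_le (h : Feasible s p proc start) (hp : 0 < p) {smin : ℝ}
    (hsmin : 0 < smin) (hs : ∀ i, smin ≤ s i) :
    makespan s p proc (roundStart s p proc start) ≤ makespan s p proc start + p / smin := by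
  have hq : ∀ i, 0 < p / s i := fun i => div_pos hp (hsmin.trans_le (hs i))
  refine Real.iSup_le (fun j => ?_) ?_
  · calc roundStart s p proc start j + p / s (proc j)
        ≤ start j + p / s (proc j) + p / s (proc j) := by
          gcongr; exact natCeil_div_mul_le_add (h.1 j) (hq _)
      _ ≤ makespan s p proc start + p / smin := by
          gcongr
          · exact le_makespan j
          · exact hs _
  · exact add_nonneg (h.makespan_nonneg hp.le fun i => (hsmin.trans_le (hs i)).le)
      (div_pos hp hsmin).le

variable (n) (s p) in
def feasibleMakespans : Set ℝ :=
  {C | ∃ proc : Fin n → Fin m, ∃ start : Fin n → ℝ,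
    Feasible s p proc start ∧ makespan s p proc start = C}

variable (n) (s p) in
def gridMakespans : Set ℝ :=
  {C | ∃ proc : Fin n → Fin m, ∃ start : Fin n → ℝ,
    Feasible s p proc start ∧ (∀ j, ∃ k : ℕ, start j = (k : ℝ) * (p / s (proc j))) ∧
    makespan s p proc start = C}

lemma gridMakespans_subset : gridMakespans n s p ⊆ feasibleMakespans n s p :=
  fun _ ⟨proc, start, hf, _, hC⟩ => ⟨proc, start, hf, hC⟩

lemma bddBelow_feasibleMakespans (hp : 0 ≤ p) (hs : ∀ i, 0 ≤ s i) :
    BddBelow (feasibleMakespans n s p) := by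
  refine ⟨0, ?_⟩
  rintro _ ⟨proc, start, hf, rfl⟩
  exact hf.makespan_nonneg hp hs

lemma exists_mem_gridMakespans_le_add (hp : 0 < p) {smin : ℝ} (hsmin : 0 < smin)
    (hs : ∀ i, smin ≤ s i) :
    ∀ C ∈ feasibleMakespans n s p, ∃ C' ∈ gridMakespans n s p, C' ≤ C + p / smin := by
  rintro _ ⟨proc, start, hf, rfl⟩
  exact ⟨_, ⟨proc, _, hf.roundStart hp fun i => hsmin.trans_le (hs i), fun j => ⟨_, rfl⟩, rfl⟩,
    makespan_roundStart_le hf hp hsmin hs⟩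

end Schedule

/-- Restricting start times on processor i to multiples of p/s_i raises the optimum
makespan by at most p/s_min: T* − p/s_min ≤ OPT ≤ T*. -/
theorem stmt4 (n m : ℕ) (s : Fin m → ℝ) (smin p : ℝ) (hp : 0 < p) (hsmin : 0 < smin)
    (hs : ∀ i, smin ≤ s i)
    (OPT Tstar : ℝ)
    (hOPT : OPT = sInf {C | ∃ proc : Fin n → Fin m, ∃ start : Fin n → ℝ,
      Feasible s p proc start ∧ makespan s p proc start = C})
    (hTstar : Tstar = sInf {C | ∃ proc : Fin n → Fin m, ∃ start : Fin n → ℝ,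
      Feasible s p proc start ∧ (∀ j, ∃ k : ℕ, start j = (k : ℝ) * (p / s (proc j))) ∧
      makespan s p proc start = C}) :
    Tstar - p / smin ≤ OPT ∧ OPT ≤ Tstar := by
  have hbdd := bddBelow_feasibleMakespans (n := n) hp.le fun i => (hsmin.trans_le (hs i)).le
  have happrox := exists_mem_gridMakespans_le_add (n := n) hp hsmin hs
  subst hOPT hTstar
  refine ⟨sub_le_iff_le_add.2 ?_, ?_⟩
  · exact Real.sInf_le_sInf_add_of_forall_exists_le_add (div_pos hp hsmin).le hbdd
      gridMakespans_subset happrox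
  · exact Real.sInf_le_sInf_of_subset_of_nonempty hbdd gridMakespans_subset
      fun ⟨C, hC⟩ => (happrox C hC).imp fun _ h => h.1
end

section
/- Let jobs each of length 1 (on a speed-1 machine) have delivery times γ_j ≥ 0, and consider m uniformly related machines with speeds s_1,…,s_m, so a job on machine i takes 1/s_i. If jobs are assigned greedily in non-increasing γ_j order, each to a machine minimizing its resulting effective finish time (completion plus γ_j), and within each machine jobs run back-to-back from time 0, then exchanging the machine assignments of any two jobs cannot decrease the maximum effective finish time. -/
/-!
Write the exchange as `a ∘ swap j k` with `j < k`. A job outside `[j, k]` keeps its finish time,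
since the swap permutes its predecessors among themselves. A job `j₀ ∈ [j, k]` is dominated by
the last job `j₃ ≤ j₀` on machine `a k` after the swap: that machine then holds `j` as well as
every job that `a` put there before `j₀`, so `j₃` finishes no earlier than `j₀` would have if
greedy had appended it to machine `a k`, while `γ j₃ ≥ γ j₀`. Greedy's choice for `j₀` was at
least as good as that.
-/

/-- The (1-indexed) position of job j on its machine under assignment a, when jobs are
placed in greedy (index) order and run back-to-back from time 0. -/
def posOf {n m : ℕ} (a : Fin n → Fin m) (j : Fin n) : ℕ :=
  (Finset.univ.filter fun j' => j' ≤ j ∧ a j' = a j).card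

/-- The maximum effective finish time (completion plus delivery time γ) of assignment a
on uniformly related machines of speeds s. -/
noncomputable def obj {n m : ℕ} (s : Fin m → ℝ) (γ : Fin n → ℝ) (a : Fin n → Fin m) : ℝ :=
  ⨆ j, ((posOf a j : ℝ) / s (a j) + γ j)

open Finset Function Equiv

lemma swap_apply_le_iff {α : Type*} [LinearOrder α] {j k x y : α} (h : j ≤ y ↔ k ≤ y) :
    swap j k x ≤ y ↔ x ≤ y := by
  rcases eq_or_ne x j with rfl | hxj
  · rw [swap_apply_left]; exact h.symm
  rcases eq_or_ne x k with rfl | hxk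
  · rw [swap_apply_right]; exact h
  · rw [swap_apply_of_ne_of_ne hxj hxk]

variable {n m : ℕ}

noncomputable def finishTime (s : Fin m → ℝ) (γ : Fin n → ℝ) (a : Fin n → Fin m)
    (j : Fin n) : ℝ :=
  (posOf a j : ℝ) / s (a j) + γ j

lemma obj_le_obj_of_forall_exists_finishTime_le {s : Fin m → ℝ} {γ : Fin n → ℝ}
    {a b : Fin n → Fin m} (h : ∀ j, ∃ j', finishTime s γ a j ≤ finishTime s γ b j') :
    obj s γ a ≤ obj s γ b := by
  cases isEmpty_or_nonempty (Fin n)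
  · simp [obj]
  · refine ciSup_le fun j => ?_
    obtain ⟨j', hj'⟩ := h j
    exact le_ciSup_of_le (Set.finite_range _).bddAbove j' hj'

lemma posOf_comp_perm (a : Fin n → Fin m) {σ : Perm (Fin n)} {j : Fin n}
    (hσ : ∀ x, σ x ≤ j ↔ x ≤ j) (hj : σ j = j) : posOf (a ∘ σ) j = posOf a j :=
  card_equiv σ fun x => by simp [hσ, hj]

lemma exists_posOf_eq_card (b : Fin n → Fin m) {j : Fin n} {i : Fin m}
    (h : ∃ x ≤ j, b x = i) :
    ∃ x ≤ j, b x = i ∧ posOf b x = #{y | y ≤ j ∧ b y = i} := by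
  set T : Finset (Fin n) := {y | y ≤ j ∧ b y = i}
  have hT : T.Nonempty := by
    obtain ⟨x, hx, hxi⟩ := h
    exact ⟨x, by simp [T, hx, hxi]⟩
  obtain ⟨hle, hi⟩ : T.max' hT ≤ j ∧ b (T.max' hT) = i := by simpa [T] using T.max'_mem hT
  refine ⟨T.max' hT, hle, hi, congrArg card (filter_congr fun y _ => ?_)⟩
  rw [hi]
  exact ⟨fun hy => ⟨hy.1.trans hle, hy.2⟩,
    fun hy => ⟨T.le_max' y (by simpa [T] using hy), hy.2⟩⟩

lemma card_lt_add_one_le_card_comp_swap (a : Fin n → Fin m) {j k j₀ : Fin n} (hj : j ≤ j₀)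
    (hk : j₀ ≤ k) (hne : a j ≠ a k) :
    #{x | x < j₀ ∧ a x = a k} + 1 ≤ #{x | x ≤ j₀ ∧ (a ∘ swap j k) x = a k} := by
  have hsub : insert j ({x | x < j₀ ∧ a x = a k} : Finset (Fin n)) ⊆
      ({x | x ≤ j₀ ∧ (a ∘ swap j k) x = a k} : Finset (Fin n)) := by
    intro x hx
    rcases mem_insert.1 hx with rfl | hx
    · simp [hj]
    · obtain ⟨hlt, hx⟩ : x < j₀ ∧ a x = a k := by simpa using hx
      have hxj : x ≠ j := fun h => hne (h ▸ hx)
      simp [hlt.le, swap_apply_of_ne_of_ne hxj (hlt.trans_le hk).ne, hx]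
  simpa [card_insert_of_notMem, hne] using card_le_card hsub

theorem obj_le_obj_comp_swap {s : Fin m → ℝ} (hs : ∀ i, 0 < s i) {γ : Fin n → ℝ}
    (hγ : ∀ j k : Fin n, j ≤ k → γ k ≤ γ j) {a : Fin n → Fin m}
    (hgreedy : ∀ j : Fin n, ∀ i : Fin m,
      (posOf a j : ℝ) / s (a j) + γ j ≤
        (((Finset.univ.filter fun j' => j' < j ∧ a j' = i).card : ℝ) + 1) / s i + γ j)
    {j k : Fin n} (hjk : j < k) (hne : a j ≠ a k) :
    obj s γ a ≤ obj s γ (a ∘ swap j k) := by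
  refine obj_le_obj_of_forall_exists_finishTime_le fun j₀ => ?_
  by_cases hmid : j ≤ j₀ ∧ j₀ ≤ k
  · obtain ⟨j₃, hj₃, hj₃k, hpos⟩ :=
      exists_posOf_eq_card (a ∘ swap j k) (i := a k) ⟨j, hmid.1, by simp⟩
    refine ⟨j₃, (hgreedy j₀ (a k)).trans ?_⟩
    have := hs (a k)
    rw [finishTime, hj₃k, hpos]
    gcongr ?_ / _ + ?_
    · exact_mod_cast card_lt_add_one_le_card_comp_swap a hmid.1 hmid.2 hne
    · exact hγ _ _ hj₃
  · have hfix : swap j k j₀ = j₀ :=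
      swap_apply_of_ne_of_ne (fun h => hmid ⟨h.ge, h ▸ hjk.le⟩)
        (fun h => hmid ⟨h ▸ hjk.le, h.le⟩)
    have hσ : ∀ x, swap j k x ≤ j₀ ↔ x ≤ j₀ := fun x =>
      swap_apply_le_iff ⟨fun h => (not_le.1 (fun h' => hmid ⟨h, h'⟩)).le, hjk.le.trans⟩
    refine ⟨j₀, le_of_eq ?_⟩
    simp only [finishTime, posOf_comp_perm a hσ hfix, comp_apply, hfix]

theorem stmt10_general (n m : ℕ) (s : Fin m → ℝ) (hs : ∀ i, 0 < s i)
    (γ : Fin n → ℝ) (hγ : ∀ j k : Fin n, j ≤ k → γ k ≤ γ j)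
    (a : Fin n → Fin m)
    (hgreedy : ∀ j : Fin n, ∀ i : Fin m,
      (posOf a j : ℝ) / s (a j) + γ j ≤
        (((Finset.univ.filter fun j' => j' < j ∧ a j' = i).card : ℝ) + 1) / s i + γ j) :
    ∀ j k : Fin n,
      obj s γ a ≤ obj s γ (Function.update (Function.update a j (a k)) k (a j)) := by
  intro j k
  by_cases hne : a j = a k
  · rw [← hne, update_eq_self, hne, update_eq_self]
  rw [← comp_swap_eq_update, swap_comm]
  rcases lt_or_gt_of_ne (ne_of_apply_ne a hne) with hjk | hkj
  · exact obj_le_obj_comp_swap hs hγ hgreedy hjk hne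
  · rw [swap_comm]
    exact obj_le_obj_comp_swap hs hγ hgreedy hkj (Ne.symm hne)

/-- If unit jobs with antitone delivery times γ are assigned greedily, each to a machine
minimizing its resulting effective finish time, then exchanging the machine assignments
of any two jobs cannot decrease the maximum effective finish time. -/
theorem stmt10 (n m : ℕ) (s : Fin m → ℝ) (hs : ∀ i, 0 < s i)
    (γ : Fin n → ℝ) (hγ0 : ∀ j, 0 ≤ γ j) (hγ : ∀ j k : Fin n, j ≤ k → γ k ≤ γ j)
    (a : Fin n → Fin m)
    (hgreedy : ∀ j : Fin n, ∀ i : Fin m,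
      (posOf a j : ℝ) / s (a j) + γ j ≤
        (((Finset.univ.filter fun j' => j' < j ∧ a j' = i).card : ℝ) + 1) / s i + γ j) :
    ∀ j k : Fin n,
      obj s γ a ≤ obj s γ (Function.update (Function.update a j (a k)) k (a j)) :=
  stmt10_general n m s hs γ hγ a hgreedy
end
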